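/- Let (X, μ) be an atomless σ-finite non-zero measure space and N a Young–Orlicz function with J(N) < ∞, and let k₀[N] ∈ (1, ∞) be the unique solution of Q[N](k₀[N]) = 1. Then the constant k₀[N] is attained: any measurable function g : X → ℝ whose tail function satisfies T[g](t) = V[N](t) for all t > 0 has ‖g‖_{wL(N)} = 1 and ‖g‖_{sL(N)} = k₀[N]. Consequently Y(N) := sup{ ‖f‖_{sL(N)} / ‖f‖_{wL(N)} : f ∈ wL(N), f ≠ 0 } = k₀[N]. -/

import Mathlib

open MeasureTheory ENNReal Set Filter Topology

/-- A Young–Orlicz function: even, continuous, convex, non-negative, strictly increasing to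
infinity on `[0, ∞)`, with `N u / u → 0` as `u → 0⁺` and `N u / u → ∞` as `u → ∞`. -/
structure IsYoungOrlicz (N : ℝ → ℝ) : Prop where
  even : ∀ u, N (-u) = N u
  continuous : Continuous N
  convexOn : ConvexOn ℝ Set.univ N
  nonneg : ∀ u, 0 ≤ N u
  strictMonoOn : StrictMonoOn N (Set.Ici 0)
  tendsto_atTop : Filter.Tendsto N Filter.atTop Filter.atTop
  tendsto_div_zero : Filter.Tendsto (fun u => N u / u) (nhdsWithin 0 (Set.Ioi 0)) (nhds 0)
  tendsto_div_atTop : Filter.Tendsto (fun u => N u / u) Filter.atTop Filter.atTop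

/-- A measure is atomless if every set of positive measure has a measurable subset of strictly
smaller positive measure. -/
def Atomless {X : Type*} [MeasurableSpace X] (μ : MeasureTheory.Measure X) : Prop :=
  ∀ s : Set X, MeasurableSet s → 0 < μ s →
    ∃ t : Set X, MeasurableSet t ∧ t ⊆ s ∧ 0 < μ t ∧ μ t < μ s

/-- The tail function `T[f](t) = μ {x : |f x| ≥ t}`. -/
noncomputable def tailFun {X : Type*} [MeasurableSpace X] (μ : MeasureTheory.Measure X)
    (f : X → ℝ) (t : ℝ) : ℝ≥0∞ :=
  μ {x | t ≤ |f x|}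

/-- `V[N](t) = min (μ X) (1 / N t)` (computed in `ℝ≥0∞`, so `1/0 = ∞`). -/
noncomputable def Vfun {X : Type*} [MeasurableSpace X] (μ : MeasureTheory.Measure X)
    (N : ℝ → ℝ) (t : ℝ) : ℝ≥0∞ :=
  min (μ Set.univ) (ENNReal.ofReal (N t))⁻¹

/-- The strong (Luxemburg) Orlicz norm, with value `∞` when `f ∉ sL(N)`. -/
noncomputable def strongNorm {X : Type*} [MeasurableSpace X] (μ : MeasureTheory.Measure X)
    (N : ℝ → ℝ) (f : X → ℝ) : ℝ≥0∞ :=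
  sInf (ENNReal.ofReal ''
    {k : ℝ | 0 < k ∧ ∫⁻ x, ENNReal.ofReal (N (|f x| / k)) ∂μ ≤ 1})

/-- The weak Orlicz (tail) norm `‖f‖_{wL(N)} = inf {K > 0 : ∀ t > 0, T[f](t) ≤ V[N](t/K)}`,
with value `∞` when `f ∉ wL(N)`. -/
noncomputable def weakNorm {X : Type*} [MeasurableSpace X] (μ : MeasureTheory.Measure X)
    (N : ℝ → ℝ) (f : X → ℝ) : ℝ≥0∞ :=
  sInf (ENNReal.ofReal ''
    {K : ℝ | 0 < K ∧ ∀ t > 0, tailFun μ f t ≤ Vfun μ N (t / K)})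

/-- `Y(N) = sup { ‖f‖_{sL(N)} / ‖f‖_{wL(N)} : f ∈ wL(N), f ≠ 0 }`. -/
noncomputable def Ynorm {X : Type*} [MeasurableSpace X] (μ : MeasureTheory.Measure X)
    (N : ℝ → ℝ) : ℝ≥0∞ :=
  ⨆ (f : X → ℝ) (_ : Measurable f) (_ : ¬ f =ᵐ[μ] (0 : X → ℝ))
    (_ : weakNorm μ N f ≠ ⊤), strongNorm μ N f / weakNorm μ N f

/-- The (generalized) inverse of a Young–Orlicz function on `[0, ∞)`. -/
noncomputable def Ninv (N : ℝ → ℝ) (w : ℝ) : ℝ :=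
  sInf {u : ℝ | 0 ≤ u ∧ w ≤ N u}

/-- `Q[N](k) = ∫_{y₀}^∞ N(y/k) |d(1/N(y))| = ∫_{1/μ(X)}^∞ N(N⁻¹(w)/k) w⁻² dw`. -/
noncomputable def Qfun {X : Type*} [MeasurableSpace X] (μ : MeasureTheory.Measure X)
    (N : ℝ → ℝ) (k : ℝ) : ℝ≥0∞ :=
  ∫⁻ w in Set.Ioi ((μ Set.univ)⁻¹.toReal), ENNReal.ofReal (N (Ninv N w / k) / w ^ 2)

/-- `G(α) = ∫₀^{1/2} (1 - z)⁻² z^{-α} dz`. -/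
noncomputable def Gfun (α : ℝ) : ℝ≥0∞ :=
  ∫⁻ z in Set.Ioo (0 : ℝ) (1/2), ENNReal.ofReal ((1 - z) ^ (-(2:ℝ)) * z ^ (-α))

/-!
By the layer-cake formula, `∫ N(|f|/k) dμ = ∫₀^∞ T[f](k N⁻¹(s)) ds`, and for the extremal tail
`T[g] = V[N]` Tonelli turns the right-hand side into `Q[N](k)`. So `∫ N(|g|/k) dμ = Q[N](k)`, which
is strictly decreasing in `k`; hence `‖g‖_{sL(N)} = k₀`. For any `f` with `T[f](t) ≤ V[N](t/K)` the
same computation gives `∫ N(|f|/(k₀K)) dμ ≤ Q[N](k₀) = 1`, i.e. `‖f‖_{sL(N)} ≤ k₀ ‖f‖_{wL(N)}`.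
Finally `‖g‖_{wL(N)} = 1` because `V[N](t/K) < V[N](t)` for large `t` as soon as `K < 1`.
-/

lemma Ninv_nonneg (N : ℝ → ℝ) (w : ℝ) : 0 ≤ Ninv N w :=
  Real.sInf_nonneg fun _ hu => hu.1

namespace IsYoungOrlicz

variable {N : ℝ → ℝ}

lemma map_zero (hN : IsYoungOrlicz N) : N 0 = 0 := by
  have hid : Tendsto (fun u : ℝ => u) (𝓝[>] 0) (𝓝 0) :=
    tendsto_id.mono_left nhdsWithin_le_nhds
  have hmul : Tendsto (fun u => N u / u * u) (𝓝[>] 0) (𝓝 0) := by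
    simpa using hN.tendsto_div_zero.mul hid
  refine tendsto_nhds_unique ((hN.continuous.tendsto 0).mono_left nhdsWithin_le_nhds)
    (hmul.congr' ?_)
  filter_upwards [self_mem_nhdsWithin] with u hu using div_mul_cancel₀ _ (ne_of_gt hu)

lemma pos (hN : IsYoungOrlicz N) {u : ℝ} (hu : 0 < u) : 0 < N u :=
  hN.map_zero ▸ hN.strictMonoOn (mem_Ici.2 le_rfl) hu.le hu

lemma exists_nonneg_apply_eq (hN : IsYoungOrlicz N) {w : ℝ} (hw : 0 ≤ w) :
    ∃ u, 0 ≤ u ∧ N u = w := by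
  obtain ⟨b, hbw, hb⟩ :=
    ((hN.tendsto_atTop.eventually_ge_atTop w).and (eventually_ge_atTop 0)).exists
  obtain ⟨u, hu, rfl⟩ := intermediate_value_Icc hb hN.continuous.continuousOn
    ⟨by rwa [hN.map_zero], hbw⟩
  exact ⟨u, hu.1, rfl⟩

lemma apply_Ninv (hN : IsYoungOrlicz N) {w : ℝ} (hw : 0 ≤ w) : N (Ninv N w) = w := by
  obtain ⟨u, hu, rfl⟩ := hN.exists_nonneg_apply_eq hw
  have hset : {v | 0 ≤ v ∧ N u ≤ N v} = Ici u := by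
    ext v
    exact ⟨fun ⟨hv, h⟩ => (hN.strictMonoOn.le_iff_le hu hv).1 h,
      fun h => ⟨hu.trans h, (hN.strictMonoOn.le_iff_le hu (hu.trans h)).2 h⟩⟩
  rw [Ninv, hset, csInf_Ici]

lemma le_Ninv_iff (hN : IsYoungOrlicz N) {w b : ℝ} (hw : 0 ≤ w) (hb : 0 ≤ b) :
    b ≤ Ninv N w ↔ N b ≤ w := by
  conv_rhs => rw [← hN.apply_Ninv hw]
  exact (hN.strictMonoOn.le_iff_le hb (Ninv_nonneg N w)).symm

lemma lt_Ninv_iff (hN : IsYoungOrlicz N) {w b : ℝ} (hw : 0 ≤ w) (hb : 0 ≤ b) :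
    b < Ninv N w ↔ N b < w := by
  conv_rhs => rw [← hN.apply_Ninv hw]
  exact (hN.strictMonoOn.lt_iff_lt hb (Ninv_nonneg N w)).symm

lemma Ninv_le_iff (hN : IsYoungOrlicz N) {w b : ℝ} (hw : 0 ≤ w) (hb : 0 ≤ b) :
    Ninv N w ≤ b ↔ w ≤ N b := by
  rw [← not_lt, ← not_lt, hN.lt_Ninv_iff hw hb]

lemma Ninv_lt_iff (hN : IsYoungOrlicz N) {w b : ℝ} (hw : 0 ≤ w) (hb : 0 ≤ b) :
    Ninv N w < b ↔ w < N b := by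
  rw [← not_le, ← not_le, hN.le_Ninv_iff hw hb]

lemma Ninv_pos (hN : IsYoungOrlicz N) {w : ℝ} (hw : 0 < w) : 0 < Ninv N w :=
  (hN.lt_Ninv_iff hw.le le_rfl).2 (by rwa [hN.map_zero])

lemma Ninv_mono (hN : IsYoungOrlicz N) : Monotone (Ninv N) := by
  intro w₁ w₂ h
  obtain ⟨u, hu, huw⟩ := hN.exists_nonneg_apply_eq (le_max_right w₂ 0)
  exact csInf_le_csInf ⟨0, fun _ hv => hv.1⟩ ⟨u, hu, huw ▸ le_max_left w₂ 0⟩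
    fun v hv => ⟨hv.1, h.trans hv.2⟩

lemma mul_Ninv_lt_iff (hN : IsYoungOrlicz N) {k s w : ℝ} (hk : 0 < k) (hs : 0 ≤ s)
    (hw : 0 ≤ w) : N (k * Ninv N s) < w ↔ s < N (Ninv N w / k) := by
  rw [← hN.lt_Ninv_iff hw (mul_nonneg hk.le (Ninv_nonneg N s)),
    ← hN.Ninv_lt_iff hs (div_nonneg (Ninv_nonneg N w) hk.le), lt_div_iff₀ hk, mul_comm]

lemma tendsto_inv_ofReal_atTop (hN : IsYoungOrlicz N) :
    Tendsto (fun u => (ENNReal.ofReal (N u))⁻¹) atTop (𝓝 0) := by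
  simpa using (ENNReal.tendsto_ofReal_atTop.comp hN.tendsto_atTop).inv

end IsYoungOrlicz

lemma lintegral_Ioi_inv_sq {m : ℝ} (hm : 0 < m) :
    ∫⁻ w in Ioi m, ENNReal.ofReal (w ^ 2)⁻¹ = (ENNReal.ofReal m)⁻¹ := by
  have hrpow : ∀ w ∈ Ioi m, ENNReal.ofReal (w ^ 2)⁻¹ = ENNReal.ofReal (w ^ (-2 : ℝ)) :=
    fun w hw => by rw [Real.rpow_neg (hm.trans hw).le, Real.rpow_two]
  rw [setLIntegral_congr_fun measurableSet_Ioi hrpow,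
    ← ofReal_integral_eq_lintegral_ofReal (integrableOn_Ioi_rpow_of_lt (by norm_num) hm)
      (ae_restrict_of_forall_mem measurableSet_Ioi fun w hw => Real.rpow_nonneg (hm.trans hw).le _),
    integral_Ioi_rpow_of_lt (by norm_num) hm, ← ENNReal.ofReal_inv_of_pos hm]
  norm_num [Real.rpow_neg_one]

lemma setLIntegral_Ioi_indicator_inv_sq {a c : ℝ} (hc : 0 < c) :
    ∫⁻ w in Ioi a, (Ioi c).indicator (fun w => ENNReal.ofReal (w ^ 2)⁻¹) w
      = min (ENNReal.ofReal a)⁻¹ (ENNReal.ofReal c)⁻¹ := by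
  rw [lintegral_indicator measurableSet_Ioi, Measure.restrict_restrict measurableSet_Ioi,
    Ioi_inter_Ioi, lintegral_Ioi_inv_sq (lt_max_of_lt_left hc), ENNReal.ofReal_max,
    Antitone.map_max (f := fun x : ℝ≥0∞ => x⁻¹) fun _ _ h => ENNReal.inv_le_inv.2 h,
    min_comm]

section Measure

variable {X : Type*} [MeasurableSpace X] (μ : Measure X) {N : ℝ → ℝ}

lemma Vfun_antitoneOn (hN : IsYoungOrlicz N) : AntitoneOn (Vfun μ N) (Ici 0) :=
  fun _ hs _ ht hst => min_le_min_left _ <| ENNReal.inv_le_inv.2 <|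
    ENNReal.ofReal_le_ofReal (hN.strictMonoOn.monotoneOn hs ht hst)

lemma Vfun_pos (hμ : μ ≠ 0) (t : ℝ) : 0 < Vfun μ N t :=
  lt_min (Measure.measure_univ_pos.2 hμ) (ENNReal.inv_pos.2 ENNReal.ofReal_ne_top)

lemma exists_Vfun_div_lt (hμ : μ ≠ 0) (hN : IsYoungOrlicz N) {K : ℝ} (hK₀ : 0 < K)
    (hK₁ : K < 1) : ∃ t > 0, Vfun μ N (t / K) < Vfun μ N t := by
  obtain ⟨s, hs, hsμ⟩ := ((eventually_gt_atTop 0).and (hN.tendsto_inv_ofReal_atTop.eventually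
    (gt_mem_nhds (Measure.measure_univ_pos.2 hμ)))).exists
  refine ⟨K * s, mul_pos hK₀ hs, ?_⟩
  rw [mul_div_cancel_left₀ s hK₀.ne']
  have hlt : N (K * s) < N s :=
    hN.strictMonoOn (mul_pos hK₀ hs).le hs.le (mul_lt_of_lt_one_left hs hK₁)
  calc Vfun μ N s ≤ (ENNReal.ofReal (N s))⁻¹ := min_le_right _ _
    _ < Vfun μ N (K * s) :=
      lt_min hsμ (ENNReal.inv_lt_inv.2 ((ENNReal.ofReal_lt_ofReal_iff (hN.pos hs)).2 hlt))

lemma ae_eq_zero_iff_tailFun_eq_zero {f : X → ℝ} :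
    f =ᵐ[μ] 0 ↔ ∀ t : ℝ, 0 < t → tailFun μ f t = 0 := by
  rw [EventuallyEq, ae_iff]
  constructor
  · refine fun hf t ht => measure_mono_null ?_ hf
    intro x (hx : t ≤ |f x|) (hfx : f x = 0)
    rw [hfx, abs_zero] at hx
    exact hx.not_gt ht
  · refine fun h => measure_mono_null (fun x hx => ?_)
      (measure_iUnion_null fun n : ℕ => h (1 / (n + 1)) (by positivity))
    obtain ⟨n, hn⟩ := exists_nat_one_div_lt (abs_pos.2 hx)
    exact mem_iUnion.2 ⟨n, hn.le⟩

lemma tailFun_le_Vfun_of_weakNorm_lt (hN : IsYoungOrlicz N) {f : X → ℝ} {K : ℝ}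
    (hK : weakNorm μ N f < ENNReal.ofReal K) {t : ℝ} (ht : 0 < t) :
    tailFun μ f t ≤ Vfun μ N (t / K) := by
  obtain ⟨_, ⟨K', ⟨hK'₀, hK'⟩, rfl⟩, hK'K⟩ := sInf_lt_iff.1 hK
  have hK'K : K' < K := (ENNReal.ofReal_lt_ofReal_iff_of_nonneg hK'₀.le).1 hK'K
  exact (hK' t ht).trans <| Vfun_antitoneOn μ hN (div_nonneg ht.le (hK'₀.trans hK'K).le)
    (div_nonneg ht.le hK'₀.le) (div_le_div_of_nonneg_left ht.le hK'₀ hK'K.le)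

lemma weakNorm_ne_zero (hN : IsYoungOrlicz N) {f : X → ℝ} (hf : ¬ f =ᵐ[μ] 0) :
    weakNorm μ N f ≠ 0 := by
  refine fun h₀ => hf ((ae_eq_zero_iff_tailFun_eq_zero μ).2 fun t ht => ?_)
  refine nonpos_iff_eq_zero.1 (ge_of_tendsto hN.tendsto_inv_ofReal_atTop ?_)
  filter_upwards [eventually_gt_atTop 0] with b hb
  calc tailFun μ f t ≤ Vfun μ N (t / (t / b)) := tailFun_le_Vfun_of_weakNorm_lt μ hN
        (by rw [h₀]; exact ENNReal.ofReal_pos.2 (div_pos ht hb)) ht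
    _ ≤ (ENNReal.ofReal (N b))⁻¹ := by rw [div_div_cancel₀ ht.ne']; exact min_le_right _ _

lemma weakNorm_eq_one_of_tailFun_eq (hμ : μ ≠ 0) (hN : IsYoungOrlicz N) {g : X → ℝ}
    (hTg : ∀ t : ℝ, 0 < t → tailFun μ g t = Vfun μ N t) : weakNorm μ N g = 1 := by
  have hone : (1 : ℝ) ∈ {K : ℝ | 0 < K ∧ ∀ t > 0, tailFun μ g t ≤ Vfun μ N (t / K)} :=
    ⟨one_pos, fun t ht => by rw [hTg t ht, div_one]⟩
  refine le_antisymm (ENNReal.ofReal_one ▸ sInf_le ⟨1, hone, rfl⟩) (le_sInf ?_)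
  rintro _ ⟨K, ⟨hK₀, hK⟩, rfl⟩
  rw [← ENNReal.ofReal_one]
  refine ENNReal.ofReal_le_ofReal (not_lt.1 fun hK₁ => ?_)
  obtain ⟨t, ht, hlt⟩ := exists_Vfun_div_lt μ hμ hN hK₀ hK₁
  exact (hK t ht).not_gt (hTg t ht ▸ hlt)

lemma lintegral_N_div_eq_lintegral_tailFun (hN : IsYoungOrlicz N) {f : X → ℝ}
    (hf : Measurable f) {c : ℝ} (hc : 0 < c) :
    ∫⁻ x, ENNReal.ofReal (N (|f x| / c)) ∂μ
      = ∫⁻ s in Ioi 0, tailFun μ f (c * Ninv N s) := by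
  rw [lintegral_eq_lintegral_meas_le μ (ae_of_all _ fun x => hN.nonneg _)
    (hN.continuous.measurable.comp (hf.abs.div_const c)).aemeasurable]
  refine setLIntegral_congr_fun measurableSet_Ioi fun s (hs : 0 < s) => congr_arg μ ?_
  ext x
  rw [mem_ofPred_eq, mem_ofPred_eq, ← hN.Ninv_le_iff hs.le (by positivity), le_div_iff₀ hc,
    mul_comm]

/-- Both sides are the integral of `w⁻²` over
`{(s, w) : s > 0, w > 1/μ(X), N(k N⁻¹(s)) < w}`. -/
theorem lintegral_Vfun_mul_Ninv_eq_Qfun (hμ : μ ≠ 0) (hN : IsYoungOrlicz N) {k : ℝ}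
    (hk : 0 < k) : ∫⁻ s in Ioi 0, Vfun μ N (k * Ninv N s) = Qfun μ N k := by
  set a := (μ univ)⁻¹.toReal
  have ha : 0 ≤ a := ENNReal.toReal_nonneg
  have haμ : (ENNReal.ofReal a)⁻¹ = μ univ := by
    rw [ENNReal.ofReal_toReal (ENNReal.inv_ne_top.2 (Measure.measure_univ_pos.2 hμ).ne'),
      inv_inv]
  have hc : Measurable fun s => N (k * Ninv N s) :=
    hN.continuous.measurable.comp (hN.Ninv_mono.measurable.const_mul k)
  let G : ℝ × ℝ → ℝ≥0∞ :=
    {p | N (k * Ninv N p.1) < p.2}.indicator fun p => ENNReal.ofReal (p.2 ^ 2)⁻¹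
  have hG : Measurable G :=
    ((measurable_snd.pow_const 2).inv.ennreal_ofReal).indicator
      (measurableSet_lt (hc.comp measurable_fst) measurable_snd)
  have hs : ∀ s ∈ Ioi (0 : ℝ), ∫⁻ w in Ioi a, G (s, w) = Vfun μ N (k * Ninv N s) :=
    fun s hs => by
      rw [Vfun, ← haμ]
      exact setLIntegral_Ioi_indicator_inv_sq (hN.pos (mul_pos hk (hN.Ninv_pos hs)))
  have hw : ∀ w ∈ Ioi a,
      ∫⁻ s in Ioi 0, G (s, w) = ENNReal.ofReal (N (Ninv N w / k) / w ^ 2) :=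
    fun w (hw : a < w) => by
      have hw₀ : 0 < w := ha.trans_lt hw
      have hset : {s | N (k * Ninv N s) < w} ∩ Ioi 0 = Ioo 0 (N (Ninv N w / k)) := by
        ext s
        simp only [mem_inter_iff, mem_ofPred_eq, mem_Ioi, mem_Ioo]
        exact ⟨fun ⟨h, hs⟩ => ⟨hs, (hN.mul_Ninv_lt_iff hk hs.le hw₀.le).1 h⟩,
          fun ⟨hs, h⟩ => ⟨(hN.mul_Ninv_lt_iff hk hs.le hw₀.le).2 h, hs⟩⟩
      have hG' : ∀ s, G (s, w)
          = {s | N (k * Ninv N s) < w}.indicator (fun _ => ENNReal.ofReal (w ^ 2)⁻¹) s :=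
        fun s => rfl
      simp only [hG']
      rw [lintegral_indicator (measurableSet_lt hc measurable_const),
        Measure.restrict_restrict (measurableSet_lt hc measurable_const), hset,
        setLIntegral_const, Real.volume_Ioo, sub_zero,
        ← ENNReal.ofReal_mul (inv_nonneg.2 (sq_nonneg w)), inv_mul_eq_div]
  calc ∫⁻ s in Ioi 0, Vfun μ N (k * Ninv N s)
      = ∫⁻ s in Ioi 0, ∫⁻ w in Ioi a, G (s, w) :=
        (setLIntegral_congr_fun measurableSet_Ioi hs).symm
    _ = ∫⁻ w in Ioi a, ∫⁻ s in Ioi 0, G (s, w) :=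
      lintegral_lintegral_swap (hG.comp measurable_id).aemeasurable
    _ = Qfun μ N k := setLIntegral_congr_fun measurableSet_Ioi hw

lemma Qfun_lt_Qfun (hN : IsYoungOrlicz N) {k k' : ℝ} (hk : 0 < k) (hkk' : k < k')
    (hQ : Qfun μ N k' ≠ ⊤) : Qfun μ N k' < Qfun μ N k := by
  have hmeas : Measurable fun w => ENNReal.ofReal (N (Ninv N w / k) / w ^ 2) :=
    ((hN.continuous.measurable.comp (hN.Ninv_mono.measurable.div_const k)).div
      (measurable_id.pow_const 2)).ennreal_ofReal
  refine lintegral_strict_mono (by simp) hmeas.aemeasurable hQ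
    (ae_restrict_of_forall_mem measurableSet_Ioi fun w (hw : _ < w) => ?_)
  have hw₀ : 0 < w := ENNReal.toReal_nonneg.trans_lt hw
  have hN₀ : 0 < Ninv N w := hN.Ninv_pos hw₀
  have hlt : N (Ninv N w / k') < N (Ninv N w / k) :=
    hN.strictMonoOn (div_nonneg hN₀.le (hk.trans hkk').le) (div_nonneg hN₀.le hk.le)
      (div_lt_div_of_pos_left hN₀ hk hkk')
  exact (ENNReal.ofReal_lt_ofReal_iff (by have := hN.pos (div_pos hN₀ hk); positivity)).2
    (div_lt_div_of_pos_right hlt (by positivity))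

lemma lintegral_N_div_eq_Qfun_of_tailFun_eq (hμ : μ ≠ 0) (hN : IsYoungOrlicz N) {g : X → ℝ}
    (hg : Measurable g) (hTg : ∀ t : ℝ, 0 < t → tailFun μ g t = Vfun μ N t) {k : ℝ}
    (hk : 0 < k) : ∫⁻ x, ENNReal.ofReal (N (|g x| / k)) ∂μ = Qfun μ N k := by
  rw [lintegral_N_div_eq_lintegral_tailFun μ hN hg hk,
    ← lintegral_Vfun_mul_Ninv_eq_Qfun μ hμ hN hk]
  exact setLIntegral_congr_fun measurableSet_Ioi fun s hs => hTg _ (mul_pos hk (hN.Ninv_pos hs))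

lemma strongNorm_eq_of_tailFun_eq (hμ : μ ≠ 0) (hN : IsYoungOrlicz N) {g : X → ℝ}
    (hg : Measurable g) (hTg : ∀ t : ℝ, 0 < t → tailFun μ g t = Vfun μ N t) {k₀ : ℝ}
    (hk₀ : 0 < k₀) (hQ : Qfun μ N k₀ = 1) : strongNorm μ N g = ENNReal.ofReal k₀ := by
  have hΦ : ∀ k, 0 < k → ∫⁻ x, ENNReal.ofReal (N (|g x| / k)) ∂μ = Qfun μ N k :=
    fun _ hk => lintegral_N_div_eq_Qfun_of_tailFun_eq μ hμ hN hg hTg hk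
  refine le_antisymm (sInf_le ⟨k₀, ⟨hk₀, (hΦ k₀ hk₀).trans_le hQ.le⟩, rfl⟩)
    (le_sInf ?_)
  rintro _ ⟨k, ⟨hk, hk₁⟩, rfl⟩
  refine ENNReal.ofReal_le_ofReal (not_lt.1 fun hkk₀ => ?_)
  have hlt := Qfun_lt_Qfun μ hN hk hkk₀ (hQ ▸ ENNReal.one_ne_top)
  rw [hQ, ← hΦ k hk] at hlt
  exact hlt.not_ge hk₁

lemma strongNorm_le_of_tailFun_le (hμ : μ ≠ 0) (hN : IsYoungOrlicz N) {f : X → ℝ}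
    (hf : Measurable f) {k K : ℝ} (hk : 0 < k) (hQ : Qfun μ N k ≤ 1) (hK : 0 < K)
    (hfK : ∀ t > 0, tailFun μ f t ≤ Vfun μ N (t / K)) :
    strongNorm μ N f ≤ ENNReal.ofReal (k * K) := by
  refine sInf_le ⟨k * K, ⟨mul_pos hk hK, ?_⟩, rfl⟩
  calc ∫⁻ x, ENNReal.ofReal (N (|f x| / (k * K))) ∂μ
      = ∫⁻ s in Ioi 0, tailFun μ f (k * K * Ninv N s) :=
        lintegral_N_div_eq_lintegral_tailFun μ hN hf (mul_pos hk hK)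
    _ ≤ ∫⁻ s in Ioi 0, Vfun μ N (k * Ninv N s) := by
        refine setLIntegral_mono' measurableSet_Ioi fun s (hs : 0 < s) => ?_
        have := hfK (k * Ninv N s * K) (mul_pos (mul_pos hk (hN.Ninv_pos hs)) hK)
        rwa [mul_div_cancel_right₀ _ hK.ne', mul_right_comm] at this
    _ = Qfun μ N k := lintegral_Vfun_mul_Ninv_eq_Qfun μ hμ hN hk
    _ ≤ 1 := hQ

lemma strongNorm_le_mul_weakNorm (hμ : μ ≠ 0) (hN : IsYoungOrlicz N) {f : X → ℝ}
    (hf : Measurable f) {k : ℝ} (hk : 0 < k) (hQ : Qfun μ N k ≤ 1) :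
    strongNorm μ N f ≤ ENNReal.ofReal k * weakNorm μ N f := by
  have hk' : ENNReal.ofReal k ≠ 0 := (ENNReal.ofReal_pos.2 hk).ne'
  rw [mul_comm, ← ENNReal.div_le_iff hk' ENNReal.ofReal_ne_top]
  refine le_sInf ?_
  rintro _ ⟨K, ⟨hK, hfK⟩, rfl⟩
  rw [ENNReal.div_le_iff hk' ENNReal.ofReal_ne_top, ← ENNReal.ofReal_mul hK.le, mul_comm]
  exact strongNorm_le_of_tailFun_le μ hμ hN hf hk hQ hK hfK

end Measure

theorem kZero_attained_and_Ynorm_eq_general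
    {X : Type*} [MeasurableSpace X] (μ : MeasureTheory.Measure X)
    (hμ0 : μ ≠ 0)
    (N : ℝ → ℝ) (hN : IsYoungOrlicz N)
    (k₀ : ℝ) (hk₀ : 1 < k₀) (hQ : Qfun μ N k₀ = 1)
    (g : X → ℝ) (hg : Measurable g)
    (hTg : ∀ t : ℝ, 0 < t → tailFun μ g t = Vfun μ N t) :
    weakNorm μ N g = 1 ∧ strongNorm μ N g = ENNReal.ofReal k₀ ∧
      Ynorm μ N = ENNReal.ofReal k₀ := by
  have hk₀pos : 0 < k₀ := one_pos.trans hk₀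
  have hweak := weakNorm_eq_one_of_tailFun_eq μ hμ0 hN hTg
  have hstrong := strongNorm_eq_of_tailFun_eq μ hμ0 hN hg hTg hk₀pos hQ
  refine ⟨hweak, hstrong, le_antisymm ?_ ?_⟩
  · refine iSup₂_le fun f hf => iSup₂_le fun hf₀ hf_top => ?_
    rw [ENNReal.div_le_iff (weakNorm_ne_zero μ hN hf₀) hf_top]
    exact strongNorm_le_mul_weakNorm μ hμ0 hN hf hk₀pos hQ.le
  · have hg₀ : ¬ g =ᵐ[μ] 0 := fun h => (Vfun_pos μ hμ0 1).ne' <|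
      hTg 1 one_pos ▸ (ae_eq_zero_iff_tailFun_eq_zero μ).1 h 1 one_pos
    calc ENNReal.ofReal k₀ = strongNorm μ N g / weakNorm μ N g := by
          rw [hstrong, hweak, div_one]
      _ ≤ Ynorm μ N := le_iSup₂_of_le g hg <| le_iSup₂_of_le hg₀ (by simp [hweak]) le_rfl

theorem kZero_attained_and_Ynorm_eq
    {X : Type*} [MeasurableSpace X] (μ : MeasureTheory.Measure X) [SigmaFinite μ]
    (hμ0 : μ ≠ 0) (hatomless : Atomless μ)
    (N : ℝ → ℝ) (hN : IsYoungOrlicz N)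
    (ν : MeasureTheory.Measure ℝ)
    (hν : ∀ t : ℝ, 0 < t → ν (Set.Ioi t) = Vfun μ N t)
    (hJ : ∃ C : ℝ, 0 < C ∧ ∫⁻ t in Set.Ioi (0:ℝ), ENNReal.ofReal (N (C * t)) ∂ν < ⊤)
    (k₀ : ℝ) (hk₀ : 1 < k₀) (hQ : Qfun μ N k₀ = 1)
    (g : X → ℝ) (hg : Measurable g)
    (hTg : ∀ t : ℝ, 0 < t → tailFun μ g t = Vfun μ N t) :
    weakNorm μ N g = 1 ∧ strongNorm μ N g = ENNReal.ofReal k₀ ∧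
      Ynorm μ N = ENNReal.ofReal k₀ :=
  kZero_attained_and_Ynorm_eq_general μ hμ0 N hN k₀ hk₀ hQ g hg hTg
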